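/- Let (X, μ) be a σ-finite measure space and let φ ∈ L^∞(X, μ) be a nonnegative function which is not constant on any set of positive measure, and suppose M_φ is nonzero. Then there exist an orthogonal projection P onto an infinite dimensional subspace of L²(X, μ) and α > 0 such that P M_φ P = α P. -/

import Mathlib

/-!
Since the level sets of `φ ≥ 0` are null and `μ ≠ 0`, some level `α > 0` has mass of `φ` both
below and above it. Splitting repeatedly, one finds infinitely many pairwise disjoint sets
`Bₙ ⊆ {φ < α}` and `Cₙ ⊆ {φ > α}` of finite positive measure. On `Bₙ ∪ Cₙ` a function `gₙ`
with constant values on `Bₙ` and `Cₙ` can be weighted so that `∫ φ gₙ² = α ∫ gₙ²`; the `gₙ` are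
orthogonal and `⟪gₘ, M_φ gₙ⟫ = α ⟪gₘ, gₙ⟫` for all `m, n`. This identity extends to the closed
span `K` of the `gₙ`, so `M_φ - α` maps `K` into `Kᗮ`, which says exactly that
`P_K M_φ P_K = α P_K`.
-/

open MeasureTheory Set Function Submodule
open scoped InnerProductSpace

section Compression

variable {𝕜 E ι : Type*} [RCLike 𝕜] [NormedAddCommGroup E] [InnerProductSpace 𝕜 E]

theorem starProjection_comp_comp_starProjection_eq_smul {K : Submodule 𝕜 E}
    [K.HasOrthogonalProjection] {T : E →L[𝕜] E} {α : 𝕜} (hK : ∀ v ∈ K, T v - α • v ∈ Kᗮ) :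
    K.starProjection ∘L T ∘L K.starProjection = α • K.starProjection := by
  ext f
  have hPf : K.starProjection f ∈ K := K.starProjection_apply_mem f
  have h := (starProjection_apply_eq_zero_iff K).2 (hK _ hPf)
  rw [map_sub, map_smul, starProjection_eq_self_iff.2 hPf, sub_eq_zero] at h
  simpa using h

theorem sub_smul_mem_orthogonal_of_inner_eq {T : E →L[𝕜] E} {α : 𝕜} {u : ι → E}
    (h : ∀ i j, ⟪u i, T (u j)⟫_𝕜 = α * ⟪u i, u j⟫_𝕜) :
    ∀ v ∈ (span 𝕜 (range u)).topologicalClosure,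
      T v - α • v ∈ (span 𝕜 (range u)).topologicalClosureᗮ := by
  set S : E →L[𝕜] E := T - α • ContinuousLinearMap.id 𝕜 E
  suffices (span 𝕜 (range u)).topologicalClosure ≤ (span 𝕜 (range u))ᗮ.comap (S : E →ₗ[𝕜] E) by
    intro v hv
    rw [orthogonal_closure]
    exact this hv
  refine topologicalClosure_minimal _ ?_ ((isClosed_orthogonal _).preimage S.continuous)
  rw [← map_le_iff_le_comap, ← isOrtho_iff_le, isOrtho_comm, map_span, isOrtho_span]
  rintro _ ⟨i, rfl⟩ _ ⟨_, ⟨j, rfl⟩, rfl⟩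
  simp [S, inner_sub_right, inner_smul_right, h]

theorem exists_compression_eq_smul_of_orthogonal [CompleteSpace E] [Infinite ι] {u : ι → E}
    (hu : ∀ i, u i ≠ 0) (horth : Pairwise fun i j => ⟪u i, u j⟫_𝕜 = 0) {T : E →L[𝕜] E} {α : 𝕜}
    (hT : ∀ i j, ⟪u i, T (u j)⟫_𝕜 = α * ⟪u i, u j⟫_𝕜) :
    ∃ P : E →L[𝕜] E, IsIdempotentElem P ∧ IsSelfAdjoint P ∧
      ¬ FiniteDimensional 𝕜 (LinearMap.range (P : E →ₗ[𝕜] E)) ∧ P ∘L T ∘L P = α • P := by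
  set K := (span 𝕜 (range u)).topologicalClosure
  refine ⟨K.starProjection, K.isIdempotentElem_starProjection, isSelfAdjoint_starProjection K,
    ?_, starProjection_comp_comp_starProjection_eq_smul (sub_smul_mem_orthogonal_of_inner_eq hT)⟩
  have hK : LinearMap.range (K.starProjection : E →ₗ[𝕜] E) = K := range_starProjection K
  rw [hK]
  intro _
  refine Module.Finite.not_linearIndependent_of_infinite (R := 𝕜) (M := K)
    (fun i => ⟨u i, le_topologicalClosure _ (subset_span (mem_range_self i))⟩) ?_
  exact .of_comp K.subtype (linearIndependent_of_ne_zero_of_inner_eq_zero hu horth)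

end Compression

theorem exists_pairwise_disjoint_of_forall_exists_disjoint {α : Type*} {p : Set α → Prop}
    (hsplit : ∀ s, p s → ∃ t₁ t₂, t₁ ⊆ s ∧ t₂ ⊆ s ∧ p t₁ ∧ p t₂ ∧ Disjoint t₁ t₂)
    {s : Set α} (hs : p s) :
    ∃ D : ℕ → Set α, (∀ n, D n ⊆ s ∧ p (D n)) ∧ Pairwise (Disjoint on D) := by
  choose! L R hL hR hpL hpR hLR using hsplit
  -- keep splitting the right half; the left halves split off along the way are pairwise disjoint
  set chain : ℕ → Set α := fun n => R^[n] s
  have hchain : ∀ n, p (chain n) := fun n => by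
    induction n with
    | zero => exact hs
    | succ n ih => simpa [chain, iterate_succ_apply'] using hpR _ ih
  have hanti : Antitone chain := antitone_nat_of_succ_le fun n => by
    simpa [chain, iterate_succ_apply'] using hR _ (hchain n)
  refine ⟨fun n => L (chain n),
    fun n => ⟨(hL _ (hchain n)).trans (hanti n.zero_le), hpL _ (hchain n)⟩, ?_⟩
  refine (pairwise_disjoint_on _).2 fun m n hmn => (hLR _ (hchain m)).mono_right ?_
  calc L (chain n) ⊆ chain n := hL _ (hchain n)
    _ ⊆ chain (m + 1) := hanti hmn
    _ = R (chain m) := iterate_succ_apply' R m s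

section Measure

variable {X : Type*} [MeasurableSpace X] {μ : Measure X} {φ : X → ℝ}

theorem measure_setOf_lt_eq_zero_of_forall_lt {c : ℝ}
    (h : ∀ b < c, μ {x | φ x < b} = 0) : μ {x | φ x < c} = 0 := by
  refine measure_mono_null (fun x hx => ?_)
    (measure_iUnion_null fun q : {q : ℚ // (q : ℝ) < c} => h q q.2)
  obtain ⟨q, hxq, hqc⟩ := exists_rat_btwn (show φ x < c from hx)
  exact mem_iUnion.2 ⟨⟨q, hqc⟩, hxq⟩

theorem measure_setOf_gt_eq_zero_of_forall_gt {c : ℝ}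
    (h : ∀ b > c, μ {x | b < φ x} = 0) : μ {x | c < φ x} = 0 := by
  refine measure_mono_null (fun x hx => ?_)
    (measure_iUnion_null fun q : {q : ℚ // c < (q : ℝ)} => h q q.2)
  obtain ⟨q, hcq, hqx⟩ := exists_rat_btwn (show c < φ x from hx)
  exact mem_iUnion.2 ⟨⟨q, hcq⟩, hqx⟩

theorem exists_pos_measure_lt_ne_zero_and_gt_ne_zero (hμ : μ ≠ 0) (hnn : ∀ x, 0 ≤ φ x)
    (hconst : ∀ c : ℝ, μ (φ ⁻¹' {c}) = 0) :
    ∃ β, 0 < β ∧ μ {x | φ x < β} ≠ 0 ∧ μ {x | β < φ x} ≠ 0 := by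
  have hcover : ∀ c : ℝ, μ {x | φ x ≤ c} = 0 → μ {x | c < φ x} ≠ 0 := fun c hle hgt =>
    hμ (Measure.measure_univ_eq_zero.1 (measure_mono_null (fun x _ => le_or_gt (φ x) c)
      (measure_union_null hle hgt)))
  -- `β` is taken just above the essential infimum `c` of `φ`
  set S : Set ℝ := {t | μ {x | φ x < t} = 0}
  have h0 : (0 : ℝ) ∈ S := by simp [S, not_lt.2 (hnn _)]
  have hbdd : BddAbove S := by
    obtain ⟨n, hn⟩ : ∃ n : ℕ, μ {x | φ x < n} ≠ 0 := by
      by_contra! h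
      exact hμ (Measure.measure_univ_eq_zero.1 (measure_mono_null
        (fun x _ => mem_iUnion.2 (exists_nat_gt (φ x))) (measure_iUnion_null h)))
    exact ⟨n, fun t ht => not_lt.1 fun hnt =>
      hn (measure_mono_null (fun x hx => lt_trans hx hnt) ht)⟩
  set c := sSup S
  have hlt : μ {x | φ x < c} = 0 := measure_setOf_lt_eq_zero_of_forall_lt fun b hb => by
    obtain ⟨t, ht, hbt⟩ := exists_lt_of_lt_csSup ⟨0, h0⟩ hb
    exact measure_mono_null (fun x hx => lt_trans hx hbt) ht
  have hle : μ {x | φ x ≤ c} = 0 :=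
    measure_mono_null (fun x (hx : φ x ≤ c) => show x ∈ φ ⁻¹' {c} ∪ {x | φ x < c} from hx.eq_or_lt)
      (measure_union_null (hconst c) hlt)
  obtain ⟨β, hcβ, hβ⟩ : ∃ β > c, μ {x | β < φ x} ≠ 0 := by
    by_contra! h
    exact hcover c hle (measure_setOf_gt_eq_zero_of_forall_gt h)
  exact ⟨β, (le_csSup hbdd h0).trans_lt hcβ, fun h => (le_csSup hbdd h).not_gt hcβ, hβ⟩

theorem exists_pairwise_disjoint_measure_ne_zero (hmeas : Measurable φ) (hnn : ∀ x, 0 ≤ φ x)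
    (hconst : ∀ c : ℝ, μ (φ ⁻¹' {c}) = 0) {s : Set X} (hs : MeasurableSet s) (hμs : μ s ≠ 0) :
    ∃ D : ℕ → Set X, (∀ n, D n ⊆ s ∧ MeasurableSet (D n) ∧ μ (D n) ≠ 0) ∧
      Pairwise (Disjoint on D) := by
  refine exists_pairwise_disjoint_of_forall_exists_disjoint
    (p := fun t => MeasurableSet t ∧ μ t ≠ 0) (fun t ⟨ht, hμt⟩ => ?_) ⟨hs, hμs⟩
  obtain ⟨β, -, hβlt, hβgt⟩ := exists_pos_measure_lt_ne_zero_and_gt_ne_zero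
    (mt Measure.restrict_eq_zero.1 hμt) hnn
    fun c => nonpos_iff_eq_zero.1 ((Measure.restrict_apply_le t _).trans (hconst c).le)
  have hlt : MeasurableSet {x | φ x < β} := measurableSet_lt hmeas measurable_const
  have hgt : MeasurableSet {x | β < φ x} := measurableSet_lt measurable_const hmeas
  rw [Measure.restrict_apply hlt] at hβlt
  rw [Measure.restrict_apply hgt] at hβgt
  exact ⟨{x | φ x < β} ∩ t, {x | β < φ x} ∩ t, inter_subset_right, inter_subset_right,
    ⟨hlt.inter ht, hβlt⟩, ⟨hgt.inter ht, hβgt⟩,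
    disjoint_left.2 fun x h₁ h₂ => lt_asymm (b := β) h₁.1 h₂.1⟩

theorem setIntegral_pos_of_forall_pos {f : X → ℝ} {s : Set X} (hs : MeasurableSet s)
    (hμs : μ s ≠ 0) (hf : IntegrableOn f s μ) (hpos : ∀ x ∈ s, 0 < f x) :
    0 < ∫ x in s, f x ∂μ := by
  rw [setIntegral_pos_iff_support_of_nonneg_ae
    ((ae_restrict_iff' hs).2 (ae_of_all _ fun x hx => (hpos x hx).le)) hf,
    inter_eq_right.2 (show s ⊆ support f from fun x hx => (hpos x hx).ne')]
  exact pos_iff_ne_zero.2 hμs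

theorem MeasureTheory.MemLp.integrableOn_of_measure_ne_top {E : Type*} [NormedAddCommGroup E]
    {f : X → E} (hf : MemLp f ⊤ μ) {s : Set X} (hs : μ s ≠ ⊤) : IntegrableOn f s μ :=
  have : IsFiniteMeasure (μ.restrict s) := isFiniteMeasure_restrict.2 hs
  (hf.restrict s).integrable le_top

theorem exists_memLp_two_integral_mul_sq_eq {α : ℝ} {B C : Set X} (hB : MeasurableSet B)
    (hC : MeasurableSet C) (hμB : μ B ≠ 0) (hμC : μ C ≠ 0) (hBfin : μ B ≠ ⊤) (hCfin : μ C ≠ ⊤)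
    (hφB : IntegrableOn φ B μ) (hφC : IntegrableOn φ C μ) (hlt : ∀ x ∈ B, φ x < α)
    (hgt : ∀ x ∈ C, α < φ x) :
    ∃ g : X → ℝ, MemLp g 2 μ ∧ support g ⊆ B ∪ C ∧ 0 < ∫ x, g x ^ 2 ∂μ ∧
      ∫ x, φ x * g x ^ 2 ∂μ = α * ∫ x, g x ^ 2 ∂μ := by
  -- `g ^ 2 = a 1_B + b 1_C`, the weights balancing the deficit of `φ` below `α` on `B`
  -- against its excess on `C`
  set a := ∫ x in C, φ x ∂μ - α * μ.real C
  set b := α * μ.real B - ∫ x in B, φ x ∂μ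
  have ha : 0 < a := by
    have := setIntegral_pos_of_forall_pos (f := fun x => φ x - α) hC hμC
      (hφC.sub (integrableOn_const hCfin)) fun x hx => sub_pos.2 (hgt x hx)
    rw [integral_sub hφC (integrableOn_const hCfin), setIntegral_const, smul_eq_mul] at this
    linarith
  have hb : 0 < b := by
    have := setIntegral_pos_of_forall_pos (f := fun x => α - φ x) hB hμB
      ((integrableOn_const hBfin).sub hφB) fun x hx => sub_pos.2 (hlt x hx)
    rw [integral_sub (g := φ) (integrableOn_const hBfin) hφB, setIntegral_const,
      smul_eq_mul] at this
    linarith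
  set w : X → ℝ := B.indicator (fun _ => a) + C.indicator (fun _ => b)
  set g : X → ℝ := fun x => √(w x)
  have hw : ∀ x, g x ^ 2 = w x := fun x => Real.sq_sqrt <|
    add_nonneg (indicator_nonneg (fun _ _ => ha.le) x) (indicator_nonneg (fun _ _ => hb.le) x)
  have hBa : Integrable (B.indicator fun _ => a) μ :=
    (integrable_indicator_iff hB).2 (integrableOn_const hBfin)
  have hCb : Integrable (C.indicator fun _ => b) μ :=
    (integrable_indicator_iff hC).2 (integrableOn_const hCfin)
  have hint_w : ∫ x, w x ∂μ = a * μ.real B + b * μ.real C := by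
    simp only [w, Pi.add_apply]
    rw [integral_add hBa hCb, integral_indicator_const _ hB, integral_indicator_const _ hC,
      smul_eq_mul, smul_eq_mul, mul_comm a, mul_comm b]
  have hint_φw : ∫ x, φ x * w x ∂μ = a * ∫ x in B, φ x ∂μ + b * ∫ x in C, φ x ∂μ := by
    have hpt : ∀ x, φ x * w x = a * B.indicator φ x + b * C.indicator φ x := fun x => by
      by_cases hxB : x ∈ B <;> by_cases hxC : x ∈ C <;> simp [w, hxB, hxC, mul_comm, mul_add]
    simp only [hpt]
    rw [integral_add ((hφB.integrable_indicator hB).const_mul a)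
      ((hφC.integrable_indicator hC).const_mul b), integral_const_mul, integral_const_mul,
      integral_indicator hB, integral_indicator hC]
  refine ⟨g, ?_, ?_, ?_, ?_⟩
  · refine (memLp_two_iff_integrable_sq ?_).2 (by simpa only [hw] using hBa.add hCb)
    exact ((measurable_const.indicator hB).add (measurable_const.indicator hC)).sqrt
      |>.aestronglyMeasurable
  · intro x hx
    by_contra hBC
    obtain ⟨hxB, hxC⟩ := not_or.1 hBC
    simp [g, w, hxB, hxC] at hx
  · simp only [hw, hint_w]
    have : 0 < μ.real B := ENNReal.toReal_pos hμB hBfin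
    positivity
  · simp only [hw, hint_φw, hint_w, a, b]
    ring

theorem exists_orthogonal_family_integral_mul_eq [SigmaFinite μ] (hmeas : Measurable φ)
    (hnn : ∀ x, 0 ≤ φ x) (hφ : MemLp φ ⊤ μ) (hconst : ∀ c : ℝ, μ (φ ⁻¹' {c}) = 0) {α : ℝ}
    (hlow : μ {x | φ x < α} ≠ 0) (hhigh : μ {x | α < φ x} ≠ 0) :
    ∃ g : ℕ → X → ℝ, (∀ n, MemLp (g n) 2 μ) ∧ (∀ n, 0 < ∫ x, g n x * g n x ∂μ) ∧
      (Pairwise fun m n => ∫ x, g m x * g n x ∂μ = 0) ∧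
      ∀ m n, ∫ x, g m x * (φ x * g n x) ∂μ = α * ∫ x, g m x * g n x ∂μ := by
  obtain ⟨B₀, hB₀, hB₀α, hB₀pos, hB₀fin⟩ := Measure.exists_subset_measure_lt_top
    (measurableSet_lt hmeas measurable_const) (pos_iff_ne_zero.2 hlow)
  obtain ⟨C₀, hC₀, hC₀α, hC₀pos, hC₀fin⟩ := Measure.exists_subset_measure_lt_top
    (measurableSet_lt measurable_const hmeas) (pos_iff_ne_zero.2 hhigh)
  obtain ⟨B, hB, hBdisj⟩ := exists_pairwise_disjoint_measure_ne_zero hmeas hnn hconst hB₀ hB₀pos.ne'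
  obtain ⟨C, hC, hCdisj⟩ := exists_pairwise_disjoint_measure_ne_zero hmeas hnn hconst hC₀ hC₀pos.ne'
  have hBfin n : μ (B n) ≠ ⊤ := ((measure_mono (hB n).1).trans_lt hB₀fin).ne
  have hCfin n : μ (C n) ≠ ⊤ := ((measure_mono (hC n).1).trans_lt hC₀fin).ne
  have hBC i j x (hi : x ∈ B i) (hj : x ∈ C j) : False :=
    lt_asymm (b := α) (hB₀α ((hB i).1 hi)) (hC₀α ((hC j).1 hj))
  choose g hg hsupp hpos hbal using fun n =>
    exists_memLp_two_integral_mul_sq_eq (hB n).2.1 (hC n).2.1 (hB n).2.2 (hC n).2.2 (hBfin n)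
      (hCfin n) (hφ.integrableOn_of_measure_ne_top (hBfin n))
      (hφ.integrableOn_of_measure_ne_top (hCfin n)) (fun x hx => hB₀α ((hB n).1 hx))
      (fun x hx => hC₀α ((hC n).1 hx))
  have hzero : Pairwise fun m n => ∀ x, g m x * g n x = 0 := fun m n hmn x => by
    by_contra h
    obtain ⟨hm, hn⟩ := mul_ne_zero_iff.1 h
    rcases hsupp m hm with hxm | hxm <;> rcases hsupp n hn with hxn | hxn
    · exact disjoint_left.1 (hBdisj hmn) hxm hxn
    · exact hBC m n x hxm hxn
    · exact hBC n m x hxn hxm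
    · exact disjoint_left.1 (hCdisj hmn) hxm hxn
  refine ⟨g, hg, fun n => by simpa only [sq] using hpos n,
    fun m n hmn => by simp [hzero hmn], fun m n => ?_⟩
  rcases eq_or_ne m n with rfl | hmn
  · simpa only [sq, mul_left_comm] using hbal m
  · simp [mul_left_comm, hzero hmn]

theorem MeasureTheory.L2.inner_eq_integral_mul_of_ae_eq_ofReal {𝕜 : Type*} [RCLike 𝕜]
    {f g : Lp 𝕜 2 μ} {w₁ w₂ : X → ℝ} (h₁ : f =ᵐ[μ] fun x => (w₁ x : 𝕜))
    (h₂ : g =ᵐ[μ] fun x => (w₂ x : 𝕜)) : ⟪f, g⟫_𝕜 = ((∫ x, w₁ x * w₂ x ∂μ : ℝ) : 𝕜) := by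
  rw [L2.inner_def, ← integral_ofReal]
  refine integral_congr_ae ?_
  filter_upwards [h₁, h₂] with x hx₁ hx₂
  simp [hx₁, hx₂, mul_comm]

end Measure

/-- A nonzero multiplication operator by a nonnegative essentially bounded function which
is not constant on any set of positive measure can be compressed to a positive multiple of
a projection of infinite rank. -/
theorem multiplication_operator_tight_compression
    {X : Type*} [MeasurableSpace X] (μ : Measure X) [SigmaFinite μ]
    (φ : X → ℝ) (hmeas : Measurable φ) (hnn : ∀ x, 0 ≤ φ x)
    (hφ : MemLp φ ⊤ μ)
    (hconst : ∀ c : ℝ, μ (φ ⁻¹' {c}) = 0)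
    (T : Lp ℂ 2 μ →L[ℂ] Lp ℂ 2 μ)
    (hT : ∀ f : Lp ℂ 2 μ, (T f : X → ℂ) =ᵐ[μ] fun x => (φ x : ℂ) * f x)
    (hT0 : T ≠ 0) :
    ∃ (P : Lp ℂ 2 μ →L[ℂ] Lp ℂ 2 μ) (α : ℝ), IsIdempotentElem P ∧ IsSelfAdjoint P ∧
      ¬ FiniteDimensional ℂ (LinearMap.range (P : Lp ℂ 2 μ →ₗ[ℂ] Lp ℂ 2 μ)) ∧ 0 < α ∧
      P ∘L T ∘L P = (α : ℂ) • P := by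
  have hμ : μ ≠ 0 := by
    rintro rfl
    exact hT0 (ContinuousLinearMap.ext fun f => Lp.ext (by simp [Filter.EventuallyEq]))
  obtain ⟨α, hα, hlow, hhigh⟩ := exists_pos_measure_lt_ne_zero_and_gt_ne_zero hμ hnn hconst
  obtain ⟨g, hg, hpos, horth, hbal⟩ :=
    exists_orthogonal_family_integral_mul_eq hmeas hnn hφ hconst hlow hhigh
  set u : ℕ → Lp ℂ 2 μ := fun n => (hg n).ofReal.toLp
  have hu n : u n =ᵐ[μ] fun x => (g n x : ℂ) := (hg n).ofReal.coeFn_toLp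
  have hinner m n : ⟪u m, u n⟫_ℂ = ((∫ x, g m x * g n x ∂μ : ℝ) : ℂ) :=
    L2.inner_eq_integral_mul_of_ae_eq_ofReal (hu m) (hu n)
  have hinnerT m n : ⟪u m, T (u n)⟫_ℂ = ((∫ x, g m x * (φ x * g n x) ∂μ : ℝ) : ℂ) := by
    refine L2.inner_eq_integral_mul_of_ae_eq_ofReal (hu m) ?_
    filter_upwards [hT (u n), hu n] with x hTx hux
    simp [hTx, hux]
  obtain ⟨P, hP, hPsa, hPrange, hPTP⟩ := exists_compression_eq_smul_of_orthogonal (u := u)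
    (fun n hn => (hpos n).ne' (by simpa [hn] using (hinner n n).symm))
    (fun m n hmn => by simp [hinner, horth hmn]) (T := T) (α := (α : ℂ))
    (fun m n => by simp [hinner, hinnerT, hbal])
  exact ⟨P, α, hP, hPsa, hPrange, hα, hPTP⟩
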